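/- Let G be a k-regular finite simple graph with vertex set V and edge set E, let β > 0, and set w = tanh β. Then the π_w-probability that the two defects coincide equals |V| divided by the Ising mean-square magnetization: [Σ_{v ∈ V} Σ_{A ∈ S_{v,v}} w^{|A|}] / [Σ_{u,v ∈ V} Σ_{A ∈ S_{u,v}} w^{|A|}] = |V| · [Σ_{σ : V → {−1,+1}} e^{β Σ_{ij∈E} σ_i σ_j}] / [Σ_{σ : V → {−1,+1}} (Σ_{x ∈ V} σ_x)^2 e^{β Σ_{ij∈E} σ_i σ_j}]. -/

import Mathlib

attribute [local instance] Classical.propDecidable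

/-- For an Ising spin configuration `σ : V → {−1,+1}` (encoded as `V → ℤˣ`), the value
`σ_i σ_j` on an (unordered) edge `{i,j}`. -/
def edgeTerm {V : Type*} (σ : V → ℤˣ) : Sym2 V → ℤ :=
  Sym2.lift ⟨fun i j => ((σ i * σ j : ℤˣ) : ℤ), fun i j => by simp [mul_comm]⟩

/-- The degree of the vertex `x` in the spanning subgraph `(V, A)`. -/
noncomputable def subDeg {V : Type*} (A : Finset (Sym2 V)) (x : V) : ℕ :=
  (A.filter fun e => x ∈ e).card

/-- `S_{u,v}`: the subsets `A` of the edge set of `G` whose set of odd-degree vertices in the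
spanning subgraph `(V, A)` is exactly `{u, v}` when `u ≠ v`, and is empty when `u = v`. -/
noncomputable def defectSets {V : Type*} [Fintype V] (G : SimpleGraph V)
    [DecidableRel G.Adj] (u v : V) : Finset (Finset (Sym2 V)) :=
  G.edgeFinset.powerset.filter fun A =>
    ∀ x, (Odd (subDeg A x) ↔ ((x = u ∨ x = v) ∧ u ≠ v))

open Finset

/-!
High-temperature expansion. As `σᵢσⱼ = ±1`, `exp (β σᵢσⱼ) = cosh β (1 + w σᵢσⱼ)` with `w = tanh β`;
expanding the product over the edges, the spin sum `∑_σ σᵤ σᵥ ∏_{e ∈ A} σₑ` equals `2^|V|` when every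
vertex has even total exponent, that is when `A ∈ S_{u,v}`, and `0` otherwise. Hence
`∑_σ σᵤ σᵥ e^{βH(σ)} = cosh β ^ |E| · 2^|V| · ∑_{A ∈ S_{u,v}} w^|A|`. Taking `u = v` (where `σᵤ² = 1`)
gives `|V| Z`, and summing over all `u, v` gives `∑_σ (∑ₓ σₓ)² e^{βH(σ)}`; the common factor cancels
in the ratio.
-/

lemma sum_units_pow (n : ℕ) : ∑ s : ℤˣ, (s : ℤ) ^ n = if Even n then 2 else 0 := by
  rw [UnitsInt.univ, sum_pair (by decide)]
  rcases Nat.even_or_odd n with h | h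
  · simp [h, h.neg_one_pow]
  · simp [h.neg_one_pow, Nat.not_even_iff_odd.mpr h]

lemma exp_mul_eq_cosh_mul_one_add_tanh_mul (β : ℝ) {t : ℤ} (ht : IsUnit t) :
    Real.exp (β * t) = Real.cosh β * (1 + Real.tanh β * t) := by
  have hc := (Real.cosh_pos β).ne'
  rw [Real.tanh_eq_sinh_div_cosh, mul_add, mul_one, ← mul_assoc, mul_div_cancel₀ _ hc]
  rcases Int.isUnit_iff.mp ht with rfl | rfl
  · simp [Real.cosh_add_sinh]
  · simp [← Real.cosh_sub_sinh, sub_eq_add_neg]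

section HighTemperatureExpansion

variable {V : Type*}

lemma isUnit_edgeTerm (σ : V → ℤˣ) (e : Sym2 V) : IsUnit (edgeTerm σ e) := by
  induction e using Sym2.ind with
  | _ i j => exact (σ i * σ j).isUnit

lemma exp_mul_sum_edgeTerm (β : ℝ) (σ : V → ℤˣ) (E : Finset (Sym2 V)) :
    Real.exp (β * ∑ e ∈ E, (edgeTerm σ e : ℝ)) =
      Real.cosh β ^ #E * ∑ A ∈ E.powerset, Real.tanh β ^ #A * ∏ e ∈ A, (edgeTerm σ e : ℝ) := by
  rw [mul_sum, Real.exp_sum, prod_congr rfl fun e _ =>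
      exp_mul_eq_cosh_mul_one_add_tanh_mul β (isUnit_edgeTerm σ e),
    prod_mul_distrib, prod_const, prod_one_add]
  simp_rw [prod_mul_distrib, prod_const]

lemma even_ite_add_ite_add_iff [DecidableEq V] {x u v : V} (n : ℕ) :
    Even ((if x = u then 1 else 0) + (if x = v then 1 else 0) + n) ↔
      (Odd n ↔ (x = u ∨ x = v) ∧ u ≠ v) := by
  by_cases hu : x = u <;> by_cases hv : x = v <;> subst_vars <;>
    simp_all [Nat.even_add_one, parity_simps, eq_comm]

-- `DecidableEq V` enters only further down, so that `x ∈ e` below is decided classically, as in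
-- `subDeg`.
variable [Fintype V]

lemma edgeTerm_eq_prod_pow (σ : V → ℤˣ) {e : Sym2 V} (he : ¬ e.IsDiag) :
    edgeTerm σ e = ∏ x, (σ x : ℤ) ^ (if x ∈ e then 1 else 0) := by
  induction e using Sym2.ind with
  | _ i j =>
    rw [Sym2.mk_isDiag_iff] at he
    simp only [Sym2.mem_iff, pow_ite, pow_one, pow_zero]
    rw [← prod_filter, show univ.filter (fun x => x = i ∨ x = j) = {i, j} by ext; simp,
      prod_pair he]
    rfl

lemma prod_edgeTerm_eq_prod_pow_subDeg (σ : V → ℤˣ) {A : Finset (Sym2 V)}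
    (hA : ∀ e ∈ A, ¬ e.IsDiag) :
    ∏ e ∈ A, edgeTerm σ e = ∏ x, (σ x : ℤ) ^ subDeg A x := by
  rw [prod_congr rfl fun e he => edgeTerm_eq_prod_pow σ (hA e he), prod_comm]
  refine prod_congr rfl fun x _ => ?_
  rw [prod_pow_eq_pow_sum, subDeg, card_filter]

variable [DecidableEq V]

lemma sum_prod_units_pow (n : V → ℕ) :
    ∑ σ : V → ℤˣ, ∏ x, (σ x : ℤ) ^ n x = if ∀ x, Even (n x) then 2 ^ Fintype.card V else 0 := by
  rw [← Fintype.prod_sum fun x (s : ℤˣ) => (s : ℤ) ^ n x]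
  simp only [sum_units_pow]
  split_ifs with h
  · rw [prod_congr rfl fun x _ => if_pos (h x), prod_const, card_univ]
  · push Not at h
    obtain ⟨x, hx⟩ := h
    exact prod_eq_zero (mem_univ x) (if_neg hx)

lemma sum_mul_mul_prod_edgeTerm (u v : V) {A : Finset (Sym2 V)}
    (hA : ∀ e ∈ A, ¬ e.IsDiag) :
    ∑ σ : V → ℤˣ, (σ u : ℤ) * σ v * ∏ e ∈ A, edgeTerm σ e =
      if ∀ x, (Odd (subDeg A x) ↔ (x = u ∨ x = v) ∧ u ≠ v) then 2 ^ Fintype.card V else 0 := by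
  have hpow (σ : V → ℤˣ) (a : V) : (σ a : ℤ) = ∏ x, (σ x : ℤ) ^ (if x = a then 1 else 0) := by
    simp
  simp_rw [prod_edgeTerm_eq_prod_pow_subDeg _ hA, hpow _ u, hpow _ v, ← prod_mul_distrib,
    ← pow_add, sum_prod_units_pow, even_ite_add_ite_add_iff]

variable (G : SimpleGraph V) [DecidableRel G.Adj] (β : ℝ)

lemma sum_mul_mul_exp_eq_sum_defectSets (u v : V) :
    ∑ σ : V → ℤˣ, ((σ u : ℤ) : ℝ) * (σ v : ℤ) *
        Real.exp (β * ∑ e ∈ G.edgeFinset, (edgeTerm σ e : ℝ)) =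
      Real.cosh β ^ #G.edgeFinset * 2 ^ Fintype.card V *
        ∑ A ∈ defectSets G u v, Real.tanh β ^ #A := by
  calc _ = ∑ A ∈ G.edgeFinset.powerset, Real.cosh β ^ #G.edgeFinset * Real.tanh β ^ #A *
        ((∑ σ : V → ℤˣ, (σ u : ℤ) * σ v * ∏ e ∈ A, edgeTerm σ e : ℤ) : ℝ) := by
        simp_rw [exp_mul_sum_edgeTerm, mul_sum]
        rw [sum_comm]
        push_cast
        refine sum_congr rfl fun A _ => ?_
        rw [mul_sum]
        exact sum_congr rfl fun σ _ => by ring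
    _ = _ := by
        rw [defectSets, sum_filter, mul_sum]
        refine sum_congr rfl fun A hA => ?_
        have hloop (e : Sym2 V) (he : e ∈ A) : ¬ e.IsDiag :=
          G.not_isDiag_of_mem_edgeSet (SimpleGraph.mem_edgeFinset.mp (mem_powerset.mp hA he))
        rw [sum_mul_mul_prod_edgeTerm u v hloop]
        split_ifs <;> push_cast <;> ring

lemma mul_sum_defectSets_self :
    Real.cosh β ^ #G.edgeFinset * 2 ^ Fintype.card V *
        ∑ v : V, ∑ A ∈ defectSets G v v, Real.tanh β ^ #A =
      Fintype.card V * ∑ σ : V → ℤˣ, Real.exp (β * ∑ e ∈ G.edgeFinset, (edgeTerm σ e : ℝ)) := by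
  have hsq (σ : V → ℤˣ) (v : V) : ((σ v : ℤ) : ℝ) * (σ v : ℤ) = 1 := by
    rw [← Int.cast_mul, ← Units.val_mul, Int.units_mul_self, Units.val_one, Int.cast_one]
  rw [mul_sum]
  simp_rw [← sum_mul_mul_exp_eq_sum_defectSets, hsq, one_mul]
  rw [sum_const, card_univ, nsmul_eq_mul]

lemma mul_sum_sum_defectSets :
    Real.cosh β ^ #G.edgeFinset * 2 ^ Fintype.card V *
        ∑ u : V, ∑ v : V, ∑ A ∈ defectSets G u v, Real.tanh β ^ #A =
      ∑ σ : V → ℤˣ, (∑ x : V, ((σ x : ℤ) : ℝ)) ^ 2 *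
        Real.exp (β * ∑ e ∈ G.edgeFinset, (edgeTerm σ e : ℝ)) := by
  calc _ = ∑ u : V, ∑ v : V, ∑ σ : V → ℤˣ, ((σ u : ℤ) : ℝ) * (σ v : ℤ) *
        Real.exp (β * ∑ e ∈ G.edgeFinset, (edgeTerm σ e : ℝ)) := by
        rw [mul_sum]
        refine sum_congr rfl fun u _ => ?_
        rw [mul_sum]
        exact sum_congr rfl fun v _ => (sum_mul_mul_exp_eq_sum_defectSets G β u v).symm
    _ = _ := by
        simp_rw [sq, sum_mul_sum, sum_mul]
        symm
        rw [sum_comm]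
        exact sum_congr rfl fun u _ => sum_comm

end HighTemperatureExpansion

theorem worm_defect_coincidence_probability_general {V : Type*} [Fintype V] [DecidableEq V]
    (G : SimpleGraph V) [DecidableRel G.Adj]
    (β : ℝ) :
    (∑ v : V, ∑ A ∈ defectSets G v v, Real.tanh β ^ A.card) /
        (∑ u : V, ∑ v : V, ∑ A ∈ defectSets G u v, Real.tanh β ^ A.card) =
      (Fintype.card V : ℝ) *
        (∑ σ : V → ℤˣ, Real.exp (β * ∑ e ∈ G.edgeFinset, (edgeTerm σ e : ℝ))) /
        (∑ σ : V → ℤˣ, (∑ x : V, ((σ x : ℤ) : ℝ)) ^ 2 *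
          Real.exp (β * ∑ e ∈ G.edgeFinset, (edgeTerm σ e : ℝ))) := by
  have hC : Real.cosh β ^ #G.edgeFinset * (2 : ℝ) ^ Fintype.card V ≠ 0 := by positivity
  rw [← mul_div_mul_left _ _ hC, mul_sum_defectSets_self, mul_sum_sum_defectSets]

/-- For a `k`-regular finite connected simple graph and `w = tanh β` with `β > 0`, the
`π_w`-probability that the two defects of the worm chain coincide equals `|V|` divided by
the Ising mean-square magnetization. -/
theorem worm_defect_coincidence_probability {V : Type*} [Fintype V] [DecidableEq V]
    (G : SimpleGraph V) [DecidableRel G.Adj] (hconn : G.Connected)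
    (k : ℕ) (hreg : ∀ v, G.degree v = k) (β : ℝ) (hβ : 0 < β) :
    (∑ v : V, ∑ A ∈ defectSets G v v, Real.tanh β ^ A.card) /
        (∑ u : V, ∑ v : V, ∑ A ∈ defectSets G u v, Real.tanh β ^ A.card) =
      (Fintype.card V : ℝ) *
        (∑ σ : V → ℤˣ, Real.exp (β * ∑ e ∈ G.edgeFinset, (edgeTerm σ e : ℝ))) /
        (∑ σ : V → ℤˣ, (∑ x : V, ((σ x : ℤ) : ℝ)) ^ 2 *
          Real.exp (β * ∑ e ∈ G.edgeFinset, (edgeTerm σ e : ℝ))) :=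
  worm_defect_coincidence_probability_general G β
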